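/- arXiv:1706.05290 — 2 statements merged into one kernel-verified Lean document; each statement's English description precedes it below -/
import Mathlib

section
/- Suppose v^max := 1_n + 2·L_red⁻¹ q belongs to D and there exists v ∈ D with v ≤ g(v) componentwise. Then g has a fixed point v* ∈ D such that v' ≤ v* for every v' ∈ D with v' ≤ g(v'); moreover the fixed-point iteration v^{(0)} = v^max, v^{(i+1)} = g(v^{(i)}) is well defined (every iterate lies in D) and converges to v*. -/
open Finset Matrix

noncomputable section

/-- Extension of a voltage vector `v ∈ ℝⁿ` to all buses `{0,1,…,n}`,
with the slack-bus convention `v₀ = 1`. -/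
def extV {n : ℕ} (v : Fin n → ℝ) : Fin (n + 1) → ℝ := Fin.cons (1 : ℝ) v

/-- The domain `D = {v ∈ ℝⁿ : vᵢ > 0 ∀ i, vᵢ vₖ ≥ sᵢₖ² on every edge}` (with `v₀ = 1`). -/
def memD {n : ℕ} (B : Matrix (Fin (n + 1)) (Fin (n + 1)) ℝ)
    (s : Fin (n + 1) → Fin (n + 1) → ℝ) (v : Fin n → ℝ) : Prop :=
  (∀ i, 0 < v i) ∧ ∀ i k, 0 < B i k → s i k ^ 2 ≤ extV v i * extV v k

/-- The fixed-point map `g` with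
`gᵢ(v) = qᵢ/𝐁ᵢ + Σ_{k ∈ N(i)} (Bᵢₖ/𝐁ᵢ)·√(vᵢvₖ − sᵢₖ²)`. -/
def gmap {n : ℕ} (B : Matrix (Fin (n + 1)) (Fin (n + 1)) ℝ)
    (s : Fin (n + 1) → Fin (n + 1) → ℝ) (q : Fin n → ℝ) (v : Fin n → ℝ) :
    Fin n → ℝ := fun i =>
  q i / (∑ k, B i.succ k) +
    ∑ k ∈ Finset.univ.filter (fun k => 0 < B i.succ k),
      (B i.succ k / (∑ k', B i.succ k')) *
        Real.sqrt (extV v i.succ * extV v k - s i.succ k ^ 2)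

/-- The reduced Laplacian `L_red` (Laplacian of the weighted graph with the
row and column of vertex `0` deleted). -/
def Lred {n : ℕ} (B : Matrix (Fin (n + 1)) (Fin (n + 1)) ℝ) :
    Matrix (Fin n) (Fin n) ℝ := fun i k =>
  if i = k then ∑ j, B i.succ j else -B i.succ k.succ

/-- `v^max := 1ₙ + 2·L_red⁻¹ q`. -/
def vmax {n : ℕ} (B : Matrix (Fin (n + 1)) (Fin (n + 1)) ℝ) (q : Fin n → ℝ) :
    Fin n → ℝ := fun i => 1 + 2 * ((Lred B)⁻¹ *ᵥ q) i

/-!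
Bounding each square root by the arithmetic mean, `√(vᵢvₖ − sᵢₖ²) ≤ (vᵢ + vₖ)/2`, turns `vᵢ ≤ gᵢ(v)`
into the linear inequality `L_red (v − v^max) ≤ 0`, and the discrete maximum principle on the
connected graph gives `v ≤ v^max`; the same bound gives `g(v^max) ≤ v^max`. Since `g` is monotone on
nonnegative vectors, the iterates from `v^max` decrease and stay above every subsolution, so they
converge, and by continuity of `g` the limit is the greatest subsolution and a fixed point.
-/

section MonotoneIteration

variable {α : Type*} [Preorder α] {f : α → α} {s : Set α} {b x : α}

theorem MonotoneOn.le_iterate_of_le_map (hf : MonotoneOn f s) (hs : IsUpperSet s) (hb : b ∈ s)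
    (hbf : b ≤ f b) (hbx : b ≤ x) (m : ℕ) : b ≤ f^[m] x := by
  induction m with
  | zero => exact hbx
  | succ m ih =>
    rw [Function.iterate_succ_apply']
    exact hbf.trans (hf hb (hs ih hb) ih)

theorem MonotoneOn.antitone_iterate_of_map_le (hf : MonotoneOn f s) (hs : IsUpperSet s)
    (hb : b ∈ s) (hbf : b ≤ f b) (hbx : b ≤ x) (hx : f x ≤ x) :
    Antitone fun m => f^[m] x := by
  have hmem (m : ℕ) : f^[m] x ∈ s := hs (hf.le_iterate_of_le_map hs hb hbf hbx m) hb
  refine antitone_nat_of_succ_le fun m => ?_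
  induction m with
  | zero => exact hx
  | succ m ih =>
    calc f^[m + 2] x = f (f^[m + 1] x) := Function.iterate_succ_apply' ..
      _ ≤ f (f^[m] x) := hf (hmem _) (hmem _) ih
      _ = f^[m + 1] x := (Function.iterate_succ_apply' ..).symm

end MonotoneIteration

theorem MonotoneOn.exists_isFixedPt_tendsto_iterate {α : Type*} [ConditionallyCompleteLattice α]
    [TopologicalSpace α] [InfConvergenceClass α] [T2Space α] {f : α → α} {s : Set α} {b x : α}
    (hf : MonotoneOn f s) (hcont : Continuous f) (hs : IsUpperSet s) (hb : b ∈ s)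
    (hbf : b ≤ f b) (hbx : b ≤ x) (hx : f x ≤ x) :
    ∃ x' : α, Function.IsFixedPt f x' ∧
      Filter.Tendsto (fun m => f^[m] x) Filter.atTop (nhds x') ∧
      ∀ c ∈ s, c ≤ f c → c ≤ x → c ≤ x' := by
  have hlim : Filter.Tendsto (fun m => f^[m] x) Filter.atTop (nhds (⨅ m, f^[m] x)) :=
    tendsto_atTop_ciInf (hf.antitone_iterate_of_map_le hs hb hbf hbx hx)
      ⟨b, Set.forall_mem_range.2 (hf.le_iterate_of_le_map hs hb hbf hbx)⟩
  refine ⟨⨅ m, f^[m] x, ?_, hlim, fun c hc hcf hcx =>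
    le_ciInf (hf.le_iterate_of_le_map hs hc hcf hcx)⟩
  have hshift : Filter.Tendsto (fun m => f (f^[m] x)) Filter.atTop (nhds (⨅ m, f^[m] x)) := by
    simpa only [Function.comp_def, Function.iterate_succ_apply'] using
      hlim.comp (Filter.tendsto_add_atTop_nat 1)
  exact tendsto_nhds_unique ((hcont.tendsto _).comp hlim) hshift

theorem Real.sqrt_sub_le_add_div_two {a b t : ℝ} (ha : 0 ≤ a) (hb : 0 ≤ b) (ht : 0 ≤ t) :
    √(a * b - t) ≤ (a + b) / 2 := by
  rw [Real.sqrt_le_left (by positivity)]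
  nlinarith [sq_nonneg (a - b)]

section Network

variable {n : ℕ} {B : Matrix (Fin (n + 1)) (Fin (n + 1)) ℝ} {s : Fin (n + 1) → Fin (n + 1) → ℝ}
  {q : Fin n → ℝ} {G : SimpleGraph (Fin (n + 1))}

theorem extV_nonneg {v : Fin n → ℝ} (hv : 0 ≤ v) (j : Fin (n + 1)) : 0 ≤ extV v j := by
  cases j using Fin.cases with
  | zero => simp [extV]
  | succ i => simpa [extV] using hv i

theorem extV_mono {v w : Fin n → ℝ} (h : v ≤ w) (j : Fin (n + 1)) : extV v j ≤ extV w j := by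
  cases j using Fin.cases with
  | zero => simp [extV]
  | succ i => simpa [extV] using h i

theorem continuous_extV_apply (j : Fin (n + 1)) : Continuous fun v : Fin n → ℝ => extV v j := by
  cases j using Fin.cases with
  | zero => simpa [extV] using continuous_const
  | succ i => simpa [extV] using continuous_apply i

theorem extV_mul_extV_mono {v w : Fin n → ℝ} (hv : 0 ≤ v) (h : v ≤ w) (j k : Fin (n + 1)) :
    extV v j * extV v k ≤ extV w j * extV w k :=
  mul_le_mul (extV_mono h j) (extV_mono h k) (extV_nonneg hv k)
    ((extV_nonneg hv j).trans (extV_mono h j))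

theorem memD.mono {v w : Fin n → ℝ} (hv : memD B s v) (h : v ≤ w) : memD B s w :=
  ⟨fun i => (hv.1 i).trans_le (h i), fun j k hjk =>
    (hv.2 j k hjk).trans (extV_mul_extV_mono (fun i => (hv.1 i).le) h j k)⟩

theorem gmap_monotoneOn (hB : ∀ i k, 0 ≤ B i k) : MonotoneOn (gmap B s q) (Set.Ici 0) :=
  fun _ hv _ _ h _ => add_le_add_right (Finset.sum_le_sum fun _ _ =>
    mul_le_mul_of_nonneg_left
      (Real.sqrt_le_sqrt (sub_le_sub_right (extV_mul_extV_mono hv h _ _) _))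
      (div_nonneg (hB _ _) (Finset.sum_nonneg fun _ _ => hB _ _))) _

theorem continuous_gmap : Continuous (gmap B s q) :=
  continuous_pi fun _ => continuous_const.add <| continuous_finsetSum _ fun _ _ =>
    continuous_const.mul <| Real.continuous_sqrt.comp <|
      ((continuous_extV_apply _).mul (continuous_extV_apply _)).sub continuous_const

end Network

section Laplacian

variable {n : ℕ} {B : Matrix (Fin (n + 1)) (Fin (n + 1)) ℝ} {s : Fin (n + 1) → Fin (n + 1) → ℝ}
  {q : Fin n → ℝ} {G : SimpleGraph (Fin (n + 1))}

/-- `L_red v` is the full Laplacian applied to `v` extended by `0` at the slack bus. -/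
theorem Lred_mulVec_apply (hBdiag : ∀ i, B i i = 0) (v : Fin n → ℝ) (i : Fin n) :
    (Lred B *ᵥ v) i = ∑ k, B i.succ k * (v i - (Fin.cons 0 v : Fin (n + 1) → ℝ) k) := by
  have hterm (k : Fin n) : Lred B i k * v k =
      (if i = k then (∑ j, B i.succ j) * v i else 0) - B i.succ k.succ * v k := by
    by_cases h : i = k
    · subst h; simp [Lred, hBdiag]
    · simp [Lred, h]
  simp only [mulVec, dotProduct, hterm, Finset.sum_sub_distrib, Finset.sum_ite_eq,
    Finset.mem_univ, if_true, mul_sub, Fin.sum_univ_succ (n := n), Fin.cons_zero, Fin.cons_succ,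
    ← Finset.sum_mul]
  ring

theorem rowSum_pos (hB : ∀ i k, 0 ≤ B i k) (hGadj : ∀ i k, G.Adj i k ↔ 0 < B i k)
    (hG : G.Connected) (i : Fin n) : 0 < ∑ k, B i.succ k := by
  obtain ⟨w⟩ := hG.preconnected i.succ 0
  exact Finset.sum_pos' (fun k _ => hB _ _)
    ⟨_, Finset.mem_univ _, (hGadj _ _).1 (w.adj_snd (w.not_nil_of_ne (Fin.succ_ne_zero i)))⟩

/-- Discrete maximum principle: a positive maximum of `w` would propagate along the edges of the
connected graph to the slack bus, where the extended vector vanishes. -/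
theorem nonpos_of_Lred_mulVec_nonpos (hBdiag : ∀ i, B i i = 0) (hB : ∀ i k, 0 ≤ B i k)
    (hGadj : ∀ i k, G.Adj i k ↔ 0 < B i k) (hG : G.Connected) {w : Fin n → ℝ}
    (hw : Lred B *ᵥ w ≤ 0) : w ≤ 0 := by
  by_contra hpos
  obtain ⟨i₀, hi₀⟩ : ∃ i, 0 < w i := by simpa [Pi.le_def] using hpos
  have : Nonempty (Fin n) := ⟨i₀⟩
  obtain ⟨j, hj⟩ := Finite.exists_max w
  set c := w j
  have hc : 0 < c := hi₀.trans_le (hj i₀)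
  set w' : Fin (n + 1) → ℝ := Fin.cons 0 w
  have hw'_le (k : Fin (n + 1)) : w' k ≤ c := by
    cases k using Fin.cases with
    | zero => exact hc.le
    | succ k => exact hj k
  have hterm_nonneg (a m : Fin (n + 1)) : 0 ≤ B a m * (c - w' m) :=
    mul_nonneg (hB _ _) (sub_nonneg.2 (hw'_le m))
  have hclosed (a k : Fin (n + 1)) (ha : w' a = c) (hadj : G.Adj a k) : w' k = c := by
    cases a using Fin.cases with
    | zero => exact absurd ha hc.ne
    | succ i =>
      have hwi : w i = c := ha
      have hsum : ∑ m, B i.succ m * (c - w' m) = 0 := by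
        refine le_antisymm ?_ (Finset.sum_nonneg fun m _ => hterm_nonneg _ m)
        simpa [Lred_mulVec_apply hBdiag, hwi] using hw i
      have hk := (Finset.sum_eq_zero_iff_of_nonneg fun m _ => hterm_nonneg _ m).1 hsum k
        (Finset.mem_univ k)
      rcases mul_eq_zero.1 hk with h | h
      · exact absurd h ((hGadj _ _).1 hadj).ne'
      · linarith
  have hreach {a b : Fin (n + 1)} (p : G.Walk a b) : w' a = c → w' b = c := by
    induction p with
    | nil => exact id
    | cons hadj _ ih => exact fun ha => ih (hclosed _ _ ha hadj)
  obtain ⟨p⟩ := hG.preconnected j.succ 0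
  exact hc.ne (hreach p rfl)

theorem isUnit_det_Lred (hBdiag : ∀ i, B i i = 0) (hB : ∀ i k, 0 ≤ B i k)
    (hGadj : ∀ i k, G.Adj i k ↔ 0 < B i k) (hG : G.Connected) : IsUnit (Lred B).det := by
  rw [isUnit_iff_ne_zero]
  intro hdet
  obtain ⟨v, hv0, hv⟩ := exists_mulVec_eq_zero_iff.2 hdet
  have hle := nonpos_of_Lred_mulVec_nonpos hBdiag hB hGadj hG hv.le
  have hge := nonpos_of_Lred_mulVec_nonpos hBdiag hB hGadj hG (w := -v) (by simp [mulVec_neg, hv])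
  exact hv0 (le_antisymm hle (neg_nonpos.1 hge))

theorem Lred_mulVec_vmax_sub_one (hBdiag : ∀ i, B i i = 0) (hB : ∀ i k, 0 ≤ B i k)
    (hGadj : ∀ i k, G.Adj i k ↔ 0 < B i k) (hG : G.Connected) (q : Fin n → ℝ) :
    Lred B *ᵥ (vmax B q - 1) = (2 : ℝ) • q := by
  have hvmax : vmax B q - 1 = (2 : ℝ) • ((Lred B)⁻¹ *ᵥ q) := by
    ext i; simp [vmax]
  rw [hvmax, mulVec_smul, mulVec_mulVec,
    mul_nonsing_inv _ (isUnit_det_Lred hBdiag hB hGadj hG), one_mulVec]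

theorem Lred_mulVec_sub_one_apply (hBdiag : ∀ i, B i i = 0) (v : Fin n → ℝ) (i : Fin n) :
    (Lred B *ᵥ (v - 1)) i = ∑ k, B i.succ k * (v i - extV v k) := by
  rw [Lred_mulVec_apply hBdiag]
  refine Finset.sum_congr rfl fun k _ => ?_
  cases k using Fin.cases with
  | zero => simp [extV]
  | succ k => simp [extV]

theorem two_mul_rowSum_mul_gmap_le (hB : ∀ i k, 0 ≤ B i k) {v : Fin n → ℝ} (hv : 0 ≤ v)
    {i : Fin n} (hBi : 0 < ∑ k, B i.succ k) :
    2 * (∑ k, B i.succ k) * gmap B s q v i ≤ 2 * q i + ∑ k, B i.succ k * (v i + extV v k) := by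
  set b := ∑ k, B i.succ k
  have hroot : ∑ k with 0 < B i.succ k, B i.succ k * √(extV v i.succ * extV v k - s i.succ k ^ 2)
      ≤ ∑ k, B i.succ k * ((v i + extV v k) / 2) := by
    rw [Finset.sum_filter_of_ne fun k _ h => (hB _ _).lt_of_ne' (left_ne_zero_of_mul h)]
    exact Finset.sum_le_sum fun k _ => mul_le_mul_of_nonneg_left
      (Real.sqrt_sub_le_add_div_two (hv i) (extV_nonneg hv k) (sq_nonneg _)) (hB _ _)
  have hgmap : gmap B s q v i = (q i + ∑ k with 0 < B i.succ k,
      B i.succ k * √(extV v i.succ * extV v k - s i.succ k ^ 2)) / b := by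
    simp only [gmap, add_div, Finset.sum_div, div_mul_eq_mul_div, b]
  rw [hgmap, mul_div_assoc', mul_div_right_comm, mul_div_cancel_right₀ _ hBi.ne']
  have hhalf : ∑ k, B i.succ k * ((v i + extV v k) / 2) =
      (∑ k, B i.succ k * (v i + extV v k)) / 2 := by
    rw [Finset.sum_div]; exact Finset.sum_congr rfl fun _ _ => by ring
  linarith

theorem two_mul_rowSum_mul_gmap_le_add (hBdiag : ∀ i, B i i = 0) (hB : ∀ i k, 0 ≤ B i k)
    (hGadj : ∀ i k, G.Adj i k ↔ 0 < B i k) (hG : G.Connected) {v : Fin n → ℝ} (hv : 0 ≤ v)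
    (i : Fin n) :
    2 * (∑ k, B i.succ k) * gmap B s q v i ≤
      2 * (∑ k, B i.succ k) * v i + (Lred B *ᵥ (vmax B q - v)) i := by
  have hsplit : vmax B q - v = (vmax B q - 1) - (v - 1) := by abel
  have hsum : ∑ k, B i.succ k * (v i + extV v k) =
      2 * (∑ k, B i.succ k) * v i - (Lred B *ᵥ (v - 1)) i := by
    rw [Lred_mulVec_sub_one_apply hBdiag, Finset.mul_sum, Finset.sum_mul, ← Finset.sum_sub_distrib]
    exact Finset.sum_congr rfl fun _ _ => by ring
  rw [hsplit, mulVec_sub, Lred_mulVec_vmax_sub_one hBdiag hB hGadj hG, Pi.sub_apply,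
    Pi.smul_apply, smul_eq_mul]
  linarith [two_mul_rowSum_mul_gmap_le (s := s) (q := q) hB hv (rowSum_pos hB hGadj hG i)]

theorem gmap_vmax_le (hBdiag : ∀ i, B i i = 0) (hB : ∀ i k, 0 ≤ B i k)
    (hGadj : ∀ i k, G.Adj i k ↔ 0 < B i k) (hG : G.Connected) (hvmax : 0 ≤ vmax B q) :
    gmap B s q (vmax B q) ≤ vmax B q := fun i => by
  have h := two_mul_rowSum_mul_gmap_le_add (s := s) (q := q) hBdiag hB hGadj hG hvmax i
  rw [sub_self, mulVec_zero, Pi.zero_apply, add_zero] at h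
  exact le_of_mul_le_mul_left h (mul_pos two_pos (rowSum_pos hB hGadj hG i))

theorem le_vmax_of_le_gmap (hBdiag : ∀ i, B i i = 0) (hB : ∀ i k, 0 ≤ B i k)
    (hGadj : ∀ i k, G.Adj i k ↔ 0 < B i k) (hG : G.Connected) {v : Fin n → ℝ} (hv : 0 ≤ v)
    (hvg : v ≤ gmap B s q v) : v ≤ vmax B q := by
  refine sub_nonpos.1 (nonpos_of_Lred_mulVec_nonpos hBdiag hB hGadj hG fun i => ?_)
  have h := two_mul_rowSum_mul_gmap_le_add (s := s) (q := q) hBdiag hB hGadj hG hv i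
  have hgi := mul_le_mul_of_nonneg_left (hvg i) (mul_pos two_pos (rowSum_pos hB hGadj hG i)).le
  rw [← neg_sub, mulVec_neg]
  simp only [Pi.neg_apply, Pi.zero_apply]
  linarith

end Laplacian

theorem stmt12_general {n : ℕ}
    (B : Matrix (Fin (n + 1)) (Fin (n + 1)) ℝ)
    (hBdiag : ∀ i, B i i = 0)
    (hBnonneg : ∀ i k, 0 ≤ B i k)
    (G : SimpleGraph (Fin (n + 1)))
    (hGadj : ∀ i k, G.Adj i k ↔ 0 < B i k)
    (hGtree : G.IsTree)
    (q : Fin n → ℝ)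
    (s : Fin (n + 1) → Fin (n + 1) → ℝ)
    (hfeas : ∃ v, memD B s v ∧ ∀ i, v i ≤ gmap B s q v i) :
    ∃ vstar : Fin n → ℝ, memD B s vstar ∧ gmap B s q vstar = vstar ∧
      (∀ v', memD B s v' → (∀ i, v' i ≤ gmap B s q v' i) → ∀ i, v' i ≤ vstar i) ∧
      (∀ m : ℕ, memD B s ((gmap B s q)^[m] (vmax B q))) ∧
      Filter.Tendsto (fun m => (gmap B s q)^[m] (vmax B q)) Filter.atTop (nhds vstar) := by
  obtain ⟨v, hvD, hvg⟩ := hfeas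
  have hG := hGtree.connected
  have hmono : MonotoneOn (gmap B s q) (Set.Ici 0) := gmap_monotoneOn hBnonneg
  have hnonneg {w : Fin n → ℝ} (hw : memD B s w) : w ∈ Set.Ici 0 := fun i => (hw.1 i).le
  have hle_vmax {w : Fin n → ℝ} (hw : memD B s w) (hwg : w ≤ gmap B s q w) : w ≤ vmax B q :=
    le_vmax_of_le_gmap hBdiag hBnonneg hGadj hG (hnonneg hw) hwg
  have hv0 : v ∈ Set.Ici 0 := hnonneg hvD
  have hv_vmax : v ≤ vmax B q := hle_vmax hvD hvg
  have hvmax : gmap B s q (vmax B q) ≤ vmax B q :=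
    gmap_vmax_le hBdiag hBnonneg hGadj hG (hnonneg (hvD.mono hv_vmax))
  obtain ⟨vstar, hfix, hlim, hgreatest⟩ := hmono.exists_isFixedPt_tendsto_iterate continuous_gmap
    (isUpperSet_Ici 0) hv0 hvg hv_vmax hvmax
  have hle_vstar (w : Fin n → ℝ) (hw : memD B s w) (hwg : w ≤ gmap B s q w) : w ≤ vstar :=
    hgreatest w (hnonneg hw) hwg (hle_vmax hw hwg)
  exact ⟨vstar, hvD.mono (hle_vstar v hvD hvg), hfix, hle_vstar,
    fun m => hvD.mono (hmono.le_iterate_of_le_map (isUpperSet_Ici 0) hv0 hvg hv_vmax m), hlim⟩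

theorem stmt12 {n : ℕ} (hn : 1 ≤ n)
    (B : Matrix (Fin (n + 1)) (Fin (n + 1)) ℝ)
    (hBsymm : ∀ i k, B i k = B k i)
    (hBdiag : ∀ i, B i i = 0)
    (hBnonneg : ∀ i k, 0 ≤ B i k)
    (G : SimpleGraph (Fin (n + 1)))
    (hGadj : ∀ i k, G.Adj i k ↔ 0 < B i k)
    (hGtree : G.IsTree)
    (q : Fin n → ℝ)
    (s : Fin (n + 1) → Fin (n + 1) → ℝ)
    (hssymm : ∀ i k, s i k = s k i)
    (hvmaxD : memD B s (vmax B q))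
    (hfeas : ∃ v, memD B s v ∧ ∀ i, v i ≤ gmap B s q v i) :
    ∃ vstar : Fin n → ℝ, memD B s vstar ∧ gmap B s q vstar = vstar ∧
      (∀ v', memD B s v' → (∀ i, v' i ≤ gmap B s q v' i) → ∀ i, v' i ≤ vstar i) ∧
      (∀ m : ℕ, memD B s ((gmap B s q)^[m] (vmax B q))) ∧
      Filter.Tendsto (fun m => (gmap B s q)^[m] (vmax B q)) Filter.atTop (nhds vstar) :=
  stmt12_general B hBdiag hBnonneg G hGadj hGtree q s hfeas
end
end

section
/- Let W ∈ ℝ^{(n+1)×(n+1)} be symmetric with zero diagonal and nonnegative entries such that the graph on vertices {0,1,…,n} with edges {i,k} whenever W_{ik} > 0 is connected. Let L ∈ ℝ^{(n+1)×(n+1)} be the weighted Laplacian (L_{ii} = Σ_k W_{ik}, L_{ik} = −W_{ik} for i ≠ k), and let L_red ∈ ℝ^{n×n} be obtained from L by deleting the row and column of vertex 0. Then L_red is positive definite, and its inverse L_red⁻¹ has all entries nonnegative with strictly positive diagonal entries. -/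
/-!
Extending `x : Fin n → ℝ` by `0` at vertex `0` to `y`, the quadratic form of the reduced
Laplacian is `½ ∑ W a b (y a - y b)²`. It vanishes only if `y` is constant along edges, hence (by
connectedness) only if `y = y 0 = 0`; so the reduced Laplacian is positive definite.
Its off-diagonal entries are `≤ 0`, and a positive definite matrix `A` with this sign pattern is
inverse-positive: if `A v ≥ 0`, the negative part `m` of `v` satisfies
`mᵀ A m = mᵀ A v⁺ - mᵀ A v ≤ 0`, since `m` and `v⁺` have disjoint supports, so `m = 0`.
The diagonal of `L_red⁻¹` is positive because `L_red⁻¹` is itself positive definite.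
-/

open Finset Matrix

noncomputable section

/-- The weighted Laplacian of `W` with the row and column of vertex `0` deleted. -/
def LapRed {n : ℕ} (W : Matrix (Fin (n + 1)) (Fin (n + 1)) ℝ) :
    Matrix (Fin n) (Fin n) ℝ := fun i k =>
  if i = k then ∑ j, W i.succ j else -W i.succ k.succ

namespace Matrix

variable {ι : Type*} [Fintype ι]

theorem PosDef.nonneg_of_mulVec_nonneg {A : Matrix ι ι ℝ} (hA : A.PosDef)
    (hoff : ∀ i j, i ≠ j → A i j ≤ 0) {v : ι → ℝ} (hv : 0 ≤ A *ᵥ v) : 0 ≤ v := by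
  have hm : 0 ≤ v⁻ := negPart_nonneg v
  have hmp : v⁻ ⬝ᵥ A *ᵥ v⁺ ≤ 0 := by
    simp only [dotProduct, mulVec, Finset.mul_sum]
    refine Finset.sum_nonpos fun i _ => Finset.sum_nonpos fun j _ => ?_
    rcases eq_or_ne i j with rfl | hij
    · have : (v i)⁻ * (v i)⁺ = 0 := by
        rcases le_total 0 (v i) with h | h <;> simp [h]
      simp only [Pi.negPart_apply, Pi.posPart_apply]
      linear_combination A i i * this
    · exact mul_nonpos_of_nonneg_of_nonpos (hm i)
        (mul_nonpos_of_nonpos_of_nonneg (hoff i j hij) (posPart_nonneg v j))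
  have hmv : 0 ≤ v⁻ ⬝ᵥ A *ᵥ v := dotProduct_nonneg_of_nonneg hm hv
  have hsplit : v⁻ ⬝ᵥ A *ᵥ v = v⁻ ⬝ᵥ A *ᵥ v⁺ - v⁻ ⬝ᵥ A *ᵥ v⁻ := by
    rw [← dotProduct_sub, ← mulVec_sub, posPart_sub_negPart]
  have hm0 : v⁻ = 0 := by
    by_contra hne
    have := hA.dotProduct_mulVec_pos hne
    rw [star_trivial] at this
    linarith
  rw [← posPart_sub_negPart v, hm0, sub_zero]
  exact posPart_nonneg v

theorem PosDef.inv_apply_nonneg [DecidableEq ι] {A : Matrix ι ι ℝ} (hA : A.PosDef)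
    (hoff : ∀ i j, i ≠ j → A i j ≤ 0) (i j : ι) : 0 ≤ A⁻¹ i j := by
  have hcol : 0 ≤ A⁻¹ *ᵥ Pi.single j 1 := by
    refine hA.nonneg_of_mulVec_nonneg hoff ?_
    rw [mulVec_mulVec, mul_nonsing_inv A hA.det_pos.ne'.isUnit, one_mulVec]
    exact Pi.single_nonneg.2 zero_le_one
  simpa [mulVec_single_one] using hcol i

end Matrix

theorem SimpleGraph.Reachable.eq_of_forall_adj {V α : Type*} {G : SimpleGraph V} {f : V → α}
    (h : ∀ u v, G.Adj u v → f u = f v) {u v : V} (huv : G.Reachable u v) : f u = f v := by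
  obtain ⟨w⟩ := huv
  induction w with
  | nil => rfl
  | cons hadj _ ih => exact (h _ _ hadj).trans ih

section WeightedLaplacian

variable {V : Type*} [Fintype V]

theorem forall_adj_eq_of_sum_weighted_sq_eq_zero {W : Matrix V V ℝ} (hW : ∀ i j, 0 ≤ W i j)
    {G : SimpleGraph V} (hG : ∀ i j, G.Adj i j → 0 < W i j) {y : V → ℝ}
    (hy : ∑ i, ∑ j, W i j * (y i - y j) ^ 2 = 0) : ∀ i j, G.Adj i j → y i = y j := by
  intro i j hij
  have hnn : ∀ a b, 0 ≤ W a b * (y a - y b) ^ 2 := fun a b => mul_nonneg (hW a b) (sq_nonneg _)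
  have hrow := (Finset.sum_eq_zero_iff_of_nonneg fun a _ => Finset.sum_nonneg fun b _ =>
    hnn a b).mp hy i (Finset.mem_univ i)
  have hterm :=
    (Finset.sum_eq_zero_iff_of_nonneg fun b _ => hnn i b).mp hrow j (Finset.mem_univ j)
  have hsq := (mul_eq_zero.mp hterm).resolve_left (hG i j hij).ne'
  exact sub_eq_zero.mp (pow_eq_zero_iff two_ne_zero |>.mp hsq)

variable [DecidableEq V]

def weightedLapMatrix (W : Matrix V V ℝ) : Matrix V V ℝ :=
  diagonal (fun i => ∑ j, W i j) - W

theorem isHermitian_weightedLapMatrix {W : Matrix V V ℝ} (hW : ∀ i j, W i j = W j i) :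
    (weightedLapMatrix W).IsHermitian := by
  refine (isHermitian_diagonal _).sub (IsHermitian.ext fun i j => ?_)
  simp [hW i j]

theorem dotProduct_weightedLapMatrix_mulVec {W : Matrix V V ℝ} (hW : ∀ i j, W i j = W j i)
    (y : V → ℝ) :
    y ⬝ᵥ weightedLapMatrix W *ᵥ y = (∑ i, ∑ j, W i j * (y i - y j) ^ 2) / 2 := by
  have hswap : ∑ i, ∑ j, W i j * y j ^ 2 = ∑ i, ∑ j, W i j * y i ^ 2 := by
    rw [Finset.sum_comm]
    simp only [hW]
  have hexpand : ∑ i, ∑ j, W i j * (y i - y j) ^ 2 =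
      ∑ i, ∑ j, W i j * y i ^ 2 + ∑ i, ∑ j, W i j * y j ^ 2
        - 2 * ∑ i, ∑ j, W i j * (y i * y j) := by
    simp only [Finset.mul_sum, ← Finset.sum_add_distrib, ← Finset.sum_sub_distrib]
    exact Finset.sum_congr rfl fun i _ => Finset.sum_congr rfl fun j _ => by ring
  have hform : y ⬝ᵥ weightedLapMatrix W *ᵥ y =
      ∑ i, ∑ j, W i j * y i ^ 2 - ∑ i, ∑ j, W i j * (y i * y j) := by
    rw [weightedLapMatrix, sub_mulVec, dotProduct_sub, funext (mulVec_diagonal _ y)]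
    simp only [dotProduct, mulVec, Finset.mul_sum, Finset.sum_mul]
    congr 1 <;> exact Finset.sum_congr rfl fun i _ => Finset.sum_congr rfl fun j _ => by ring
  rw [hform, hexpand, hswap]
  ring

end WeightedLaplacian

theorem dotProduct_submatrix_succ_mulVec {R : Type*} [NonUnitalNonAssocSemiring R] {n : ℕ}
    (A : Matrix (Fin (n + 1)) (Fin (n + 1)) R) (x : Fin n → R) :
    x ⬝ᵥ A.submatrix Fin.succ Fin.succ *ᵥ x =
      (Fin.cons 0 x : Fin (n + 1) → R) ⬝ᵥ A *ᵥ Fin.cons 0 x := by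
  simp [dotProduct, mulVec, Fin.sum_univ_succ]

section LapRed

variable {n : ℕ} {W : Matrix (Fin (n + 1)) (Fin (n + 1)) ℝ}

theorem lapRed_eq_submatrix (hWdiag : ∀ i, W i i = 0) :
    LapRed W = (weightedLapMatrix W).submatrix Fin.succ Fin.succ := by
  ext i k
  by_cases h : i = k
  · simp [LapRed, weightedLapMatrix, h, hWdiag]
  · simp [LapRed, weightedLapMatrix, h]

theorem lapRed_apply_nonpos (hWnonneg : ∀ i k, 0 ≤ W i k) {i k : Fin n} (hik : i ≠ k) :
    LapRed W i k ≤ 0 := by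
  simpa [LapRed, hik] using hWnonneg i.succ k.succ

theorem posDef_lapRed (hWsymm : ∀ i k, W i k = W k i) (hWdiag : ∀ i, W i i = 0)
    (hWnonneg : ∀ i k, 0 ≤ W i k) {G : SimpleGraph (Fin (n + 1))}
    (hG : ∀ i k, G.Adj i k → 0 < W i k) (hGconn : G.Connected) : (LapRed W).PosDef := by
  rw [lapRed_eq_submatrix hWdiag]
  refine PosDef.of_dotProduct_mulVec_pos
    ((isHermitian_weightedLapMatrix hWsymm).submatrix _) fun x hx => ?_
  set y : Fin (n + 1) → ℝ := Fin.cons 0 x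
  rw [star_trivial, dotProduct_submatrix_succ_mulVec, dotProduct_weightedLapMatrix_mulVec hWsymm]
  have hsum : 0 ≤ ∑ i, ∑ j, W i j * (y i - y j) ^ 2 :=
    Finset.sum_nonneg fun i _ => Finset.sum_nonneg fun j _ =>
      mul_nonneg (hWnonneg i j) (sq_nonneg _)
  refine div_pos (hsum.lt_of_ne fun hzero => hx ?_) two_pos
  have hadj := forall_adj_eq_of_sum_weighted_sq_eq_zero hWnonneg hG hzero.symm
  funext i
  simpa [y] using (hGconn i.succ 0).eq_of_forall_adj hadj

end LapRed

theorem stmt18 {n : ℕ}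
    (W : Matrix (Fin (n + 1)) (Fin (n + 1)) ℝ)
    (hWsymm : ∀ i k, W i k = W k i)
    (hWdiag : ∀ i, W i i = 0)
    (hWnonneg : ∀ i k, 0 ≤ W i k)
    (G : SimpleGraph (Fin (n + 1)))
    (hGadj : ∀ i k, G.Adj i k ↔ 0 < W i k)
    (hGconn : G.Connected) :
    (LapRed W).PosDef ∧
      (∀ i k, 0 ≤ (LapRed W)⁻¹ i k) ∧
      ∀ i, 0 < (LapRed W)⁻¹ i i := by
  have hpd : (LapRed W).PosDef :=
    posDef_lapRed hWsymm hWdiag hWnonneg (fun i k => (hGadj i k).mp) hGconn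
  exact ⟨hpd, hpd.inv_apply_nonneg fun i k => lapRed_apply_nonpos hWnonneg,
    fun i => hpd.inv.diag_pos⟩
end
end
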